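/- arXiv:2508.03075 — 4 statements merged into one kernel-verified Lean document; each statement's English description precedes it below -/
import Mathlib

section
/- Under the hypotheses that r'' = -(γ/|r|³) r and p'' = (3γ/|r|⁵)(r·p) r - (γ/|r|³) p with r(t) ≠ 0 for all t, the function Z = p' × r - p × r' is a constant vector (Pines's vector integral). -/
/-!
Differentiating `Z = p' × r - p × r'` the mixed terms `p' × r'` cancel, leaving
`Z' = p'' × r - p × r''`. With `k = γ / |r|³` the equations of motion give `r'' = -k r` and
`p'' = a r - k p` for a scalar `a`; since `r × r = 0`, both remaining terms equal `-k (p × r)`.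
-/

open Matrix

/-- Euclidean norm of a vector in ℝ³. -/
noncomputable def e3norm (x : Fin 3 → ℝ) : ℝ := Real.sqrt (x ⬝ᵥ x)

section Calculus

variable {𝕜 : Type*} [NontriviallyNormedField 𝕜] [CompleteSpace 𝕜]

theorem HasDerivAt.cross {u v : 𝕜 → Fin 3 → 𝕜} {u' v' : Fin 3 → 𝕜} {t : 𝕜}
    (hu : HasDerivAt u u' t) (hv : HasDerivAt v v' t) :
    HasDerivAt (fun t => u t ⨯₃ v t) (u' ⨯₃ v t + u t ⨯₃ v') t := by
  rw [add_comm]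
  exact (crossProduct (R := 𝕜)).toContinuousBilinearMap.hasDerivAt_of_bilinear
    (fun _ => hu) (fun _ => hv)

theorem hasDerivAt_deriv_cross_sub_cross_deriv {u v : 𝕜 → Fin 3 → 𝕜} {t : 𝕜}
    (hu : DifferentiableAt 𝕜 u t) (hu' : DifferentiableAt 𝕜 (deriv u) t)
    (hv : DifferentiableAt 𝕜 v t) (hv' : DifferentiableAt 𝕜 (deriv v) t) :
    HasDerivAt (fun t => deriv u t ⨯₃ v t - u t ⨯₃ deriv v t)
      (deriv (deriv u) t ⨯₃ v t - u t ⨯₃ deriv (deriv v) t) t := by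
  refine ((hu'.hasDerivAt.cross hv.hasDerivAt).sub
    (hu.hasDerivAt.cross hv'.hasDerivAt)).congr_deriv ?_
  abel

end Calculus

theorem sub_smul_cross_sub_cross_neg_smul {R : Type*} [CommRing R] (u v : Fin 3 → R) (a k : R) :
    (a • v - k • u) ⨯₃ v - u ⨯₃ (-k • v) = 0 := by
  simp [cross_self]

theorem stmt2_general (γ : ℝ) (r p : ℝ → Fin 3 → ℝ)
    (hr1 : Differentiable ℝ r) (hr2 : Differentiable ℝ (deriv r))
    (hp1 : Differentiable ℝ p) (hp2 : Differentiable ℝ (deriv p))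
    (hreq : ∀ t, deriv (deriv r) t = -(γ / (e3norm (r t))^3) • r t)
    (hpeq : ∀ t, deriv (deriv p) t =
      (3 * γ / (e3norm (r t))^5 * (r t ⬝ᵥ p t)) • r t - (γ / (e3norm (r t))^3) • p t) :
    ∀ t s, deriv p t ⨯₃ r t - p t ⨯₃ deriv r t = deriv p s ⨯₃ r s - p s ⨯₃ deriv r s := by
  have hZ' : ∀ t, HasDerivAt (fun t => deriv p t ⨯₃ r t - p t ⨯₃ deriv r t) 0 t := by
    intro t
    have h := hasDerivAt_deriv_cross_sub_cross_deriv (hp1 t) (hp2 t) (hr1 t) (hr2 t)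
    rwa [hreq, hpeq, sub_smul_cross_sub_cross_neg_smul] at h
  intro t s
  exact is_const_of_deriv_eq_zero (fun x => (hZ' x).differentiableAt) (fun x => (hZ' x).deriv) t s

theorem stmt2 (γ : ℝ) (hγ : 0 < γ) (r p : ℝ → Fin 3 → ℝ)
    (hrne : ∀ t, r t ≠ 0)
    (hr1 : Differentiable ℝ r) (hr2 : Differentiable ℝ (deriv r))
    (hp1 : Differentiable ℝ p) (hp2 : Differentiable ℝ (deriv p))
    (hreq : ∀ t, deriv (deriv r) t = -(γ / (e3norm (r t))^3) • r t)
    (hpeq : ∀ t, deriv (deriv p) t =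
      (3 * γ / (e3norm (r t))^5 * (r t ⬝ᵥ p t)) • r t - (γ / (e3norm (r t))^3) • p t) :
    ∀ t s, deriv p t ⨯₃ r t - p t ⨯₃ deriv r t = deriv p s ⨯₃ r s - p s ⨯₃ deriv r s :=
  stmt2_general γ r p hr1 hr2 hp1 hp2 hreq hpeq
end

section
/- On coast arcs (zero thrust), the Hamiltonian first integral holds: the function t ↦ -(γ/|r|³)(r·p) - r'·p' is constant whenever r'' = -(γ/|r|³) r and p'' = (3γ/|r|⁵)(r·p) r - (γ/|r|³) p. -/
open Matrix

/-!
Write `k = γ / |r|³`, so that the coast equations read `r'' = -k r` and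
`p'' = m r - k p` with `m = 3γ (r·p) / |r|⁵`. Differentiating
`H = -k (r·p) - r'·p'`, the terms in `k` cancel in pairs and what is left is
`-k' (r·p) - m (r·r')`, which vanishes because `k' = -3γ (r·r') / |r|⁵`.
-/

theorem HasDerivAt.dotProduct {ι : Type*} [Fintype ι] {f g : ℝ → ι → ℝ} {f' g' : ι → ℝ}
    {t : ℝ} (hf : HasDerivAt f f' t) (hg : HasDerivAt g g' t) :
    HasDerivAt (fun t => f t ⬝ᵥ g t) (f' ⬝ᵥ g t + f t ⬝ᵥ g') t := by
  have hcoord : ∀ i ∈ Finset.univ,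
      HasDerivAt (fun t => f t i * g t i) (f' i * g t i + f t i * g' i) t :=
    fun i _ => (hasDerivAt_pi.mp hf i).mul (hasDerivAt_pi.mp hg i)
  unfold _root_.dotProduct
  rw [← Finset.sum_add_distrib]
  exact HasDerivAt.fun_sum hcoord

theorem e3norm_sq (x : Fin 3 → ℝ) : e3norm x ^ 2 = x ⬝ᵥ x :=
  Real.sq_sqrt (Finset.sum_nonneg fun i _ => mul_self_nonneg (x i))

theorem e3norm_pos {x : Fin 3 → ℝ} (hx : x ≠ 0) : 0 < e3norm x := by
  refine Real.sqrt_pos.mpr (lt_of_le_of_ne ?_ ?_)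
  · exact Finset.sum_nonneg fun i _ => mul_self_nonneg (x i)
  · exact fun h => hx (dotProduct_self_eq_zero.mp h.symm)

theorem hasDerivAt_e3norm {r : ℝ → Fin 3 → ℝ} {r' : Fin 3 → ℝ} {t : ℝ}
    (hr : HasDerivAt r r' t) (hrt : r t ≠ 0) :
    HasDerivAt (fun t => e3norm (r t)) ((r t ⬝ᵥ r') / e3norm (r t)) t := by
  have hpos := e3norm_pos hrt
  have hsq : r t ⬝ᵥ r t ≠ 0 := by rw [← e3norm_sq]; positivity
  refine ((hr.dotProduct hr).sqrt hsq).congr_deriv ?_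
  rw [dotProduct_comm r' (r t), ← e3norm]
  field_simp
  ring

theorem hasDerivAt_div_e3norm_pow_three (γ : ℝ) {r : ℝ → Fin 3 → ℝ} {r' : Fin 3 → ℝ} {t : ℝ}
    (hr : HasDerivAt r r' t) (hrt : r t ≠ 0) :
    HasDerivAt (fun t => γ / e3norm (r t) ^ 3)
      (-(3 * γ / e3norm (r t) ^ 5 * (r t ⬝ᵥ r'))) t := by
  have hpos := e3norm_pos hrt
  refine ((hasDerivAt_const t γ).fun_div ((hasDerivAt_e3norm hr hrt).fun_pow 3)
    (by positivity)).congr_deriv ?_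
  field_simp
  ring

theorem hasDerivAt_coast_hamiltonian (γ : ℝ) {r p v w : ℝ → Fin 3 → ℝ} {t : ℝ}
    (hrt : r t ≠ 0) (hr : HasDerivAt r (v t) t) (hp : HasDerivAt p (w t) t)
    (hv : HasDerivAt v (-(γ / e3norm (r t) ^ 3) • r t) t)
    (hw : HasDerivAt w
      ((3 * γ / e3norm (r t) ^ 5 * (r t ⬝ᵥ p t)) • r t - (γ / e3norm (r t) ^ 3) • p t) t) :
    HasDerivAt (fun t => -(γ / e3norm (r t) ^ 3) * (r t ⬝ᵥ p t) - v t ⬝ᵥ w t) 0 t := by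
  refine (((hasDerivAt_div_e3norm_pow_three γ hr hrt).fun_neg.mul (hr.dotProduct hp)).sub
    (hv.dotProduct hw)).congr_deriv ?_
  simp only [smul_dotProduct, dotProduct_smul, dotProduct_sub, smul_eq_mul,
    dotProduct_comm (v t) (r t), dotProduct_comm (v t) (p t)]
  ring

theorem stmt9_general (γ : ℝ) (r p : ℝ → Fin 3 → ℝ)
    (hrne : ∀ t, r t ≠ 0)
    (hr1 : Differentiable ℝ r) (hr2 : Differentiable ℝ (deriv r))
    (hp1 : Differentiable ℝ p) (hp2 : Differentiable ℝ (deriv p))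
    (hreq : ∀ t, deriv (deriv r) t = -(γ / (e3norm (r t))^3) • r t)
    (hpeq : ∀ t, deriv (deriv p) t =
      (3 * γ / (e3norm (r t))^5 * (r t ⬝ᵥ p t)) • r t - (γ / (e3norm (r t))^3) • p t) :
    ∀ t s, -(γ / (e3norm (r t))^3) * (r t ⬝ᵥ p t) - deriv r t ⬝ᵥ deriv p t =
           -(γ / (e3norm (r s))^3) * (r s ⬝ᵥ p s) - deriv r s ⬝ᵥ deriv p s := by
  have hH : ∀ u, HasDerivAt
      (fun t => -(γ / e3norm (r t) ^ 3) * (r t ⬝ᵥ p t) - deriv r t ⬝ᵥ deriv p t) 0 u := by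
    intro u
    refine hasDerivAt_coast_hamiltonian γ (hrne u) (hr1 u).hasDerivAt (hp1 u).hasDerivAt ?_ ?_
    · exact hreq u ▸ (hr2 u).hasDerivAt
    · exact hpeq u ▸ (hp2 u).hasDerivAt
  exact is_const_of_deriv_eq_zero (fun u => (hH u).differentiableAt) (fun u => (hH u).deriv)

theorem stmt9 (γ : ℝ) (hγ : 0 < γ) (r p : ℝ → Fin 3 → ℝ)
    (hrne : ∀ t, r t ≠ 0)
    (hr1 : Differentiable ℝ r) (hr2 : Differentiable ℝ (deriv r))
    (hp1 : Differentiable ℝ p) (hp2 : Differentiable ℝ (deriv p))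
    (hreq : ∀ t, deriv (deriv r) t = -(γ / (e3norm (r t))^3) • r t)
    (hpeq : ∀ t, deriv (deriv p) t =
      (3 * γ / (e3norm (r t))^5 * (r t ⬝ᵥ p t)) • r t - (γ / (e3norm (r t))^3) • p t) :
    ∀ t s, -(γ / (e3norm (r t))^3) * (r t ⬝ᵥ p t) - deriv r t ⬝ᵥ deriv p t =
           -(γ / (e3norm (r s))^3) * (r s ⬝ᵥ p s) - deriv r s ⬝ᵥ deriv p s :=
  stmt9_general γ r p hrne hr1 hr2 hp1 hp2 hreq hpeq
end

section
/- Let ν : ℝ → ℝ be the out-of-plane primer component satisfying ν'' = (-γ/r³ + (v_θ/r)²) ν along a Keplerian orbit, where r and v_θ satisfy r' = v_r, v_r' = (v_θ² - γ/r)/r, v_θ' = -v_r v_θ / r. Then ν(t) = E / v_θ(t) is a solution for any constant E. -/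
open Matrix

/-!
The azimuthal equation `v_θ' = -v_r v_θ / r` says that the angular momentum `r v_θ` is
conserved, so `E / v_θ = (E / h) r` with `h = r v_θ` constant. Hence `ν'' = (E / h) v_r'`, and
the radial equation `v_r' = (v_θ² - γ / r) / r` is, after dividing by `h = r v_θ`, exactly the
claimed equation for `ν`.
-/

theorem mul_eq_of_deriv_eq_neg_mul_div {f g f' : ℝ → ℝ} (hf : Differentiable ℝ f)
    (hg : Differentiable ℝ g) (hf0 : ∀ t, f t ≠ 0) (hff' : ∀ t, deriv f t = f' t)
    (hgf' : ∀ t, deriv g t = -(f' t * g t) / f t) (s t : ℝ) :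
    f s * g s = f t * g t := by
  refine is_const_of_deriv_eq_zero (hf.mul hg) (fun x => ?_) s t
  rw [deriv_mul (hf x) (hg x), hff', hgf']
  field_simp [hf0 x]
  ring

theorem const_div_eq_mul_of_mul_eq {f g : ℝ → ℝ} (hf0 : ∀ t, f t ≠ 0) (hg0 : ∀ t, g t ≠ 0)
    (hfg : ∀ s t, f s * g s = f t * g t) (E t₀ : ℝ) :
    (fun s => E / g s) = fun s => E / (f t₀ * g t₀) * f s := by
  funext s
  rw [← hfg s t₀]
  field_simp [hf0 s, hg0 s]

theorem stmt10_general (γ E : ℝ) (r vr vθ : ℝ → ℝ)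
    (hrpos : ∀ t, 0 < r t) (hvθpos : ∀ t, 0 < vθ t)
    (hr : Differentiable ℝ r) (hvθ : Differentiable ℝ vθ)
    (hreq : ∀ t, deriv r t = vr t)
    (hvreq : ∀ t, deriv vr t = ((vθ t)^2 - γ / r t) / r t)
    (hvθeq : ∀ t, deriv vθ t = -(vr t * vθ t) / r t) :
    ∀ t, deriv (deriv (fun s => E / vθ s)) t =
      (-γ / (r t)^3 + (vθ t / r t)^2) * (E / vθ t) := by
  intro t
  have hr0 t : r t ≠ 0 := (hrpos t).ne'
  have hvθ0 t : vθ t ≠ 0 := (hvθpos t).ne'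
  have hmomentum := mul_eq_of_deriv_eq_neg_mul_div hr hvθ hr0 hreq hvθeq
  rw [const_div_eq_mul_of_mul_eq hr0 hvθ0 hmomentum E t, deriv_const_mul_field',
    funext hreq, deriv_const_mul_field']
  dsimp only
  rw [hvreq]
  field_simp [hr0 t, hvθ0 t]
  ring

theorem stmt10 (γ E : ℝ) (hγ : 0 < γ) (r vr vθ : ℝ → ℝ)
    (hrpos : ∀ t, 0 < r t) (hvθpos : ∀ t, 0 < vθ t)
    (hr : Differentiable ℝ r) (hvr : Differentiable ℝ vr) (hvθ : Differentiable ℝ vθ)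
    (hreq : ∀ t, deriv r t = vr t)
    (hvreq : ∀ t, deriv vr t = ((vθ t)^2 - γ / r t) / r t)
    (hvθeq : ∀ t, deriv vθ t = -(vr t * vθ t) / r t) :
    ∀ t, deriv (deriv (fun s => E / vθ s)) t =
      (-γ / (r t)^3 + (vθ t / r t)^2) * (E / vθ t) :=
  stmt10_general γ E r vr vθ hrpos hvθpos hr hvθ hreq hvreq hvθeq
end

section
/- Suppose λ, μ : ℝ → ℝ satisfy the reduced primer system λ' = (1/v_r)((v_θ² - γ/r)(λ/r) + (v_θ/r) A + C) and μ' = (1/r)(v_r μ - 2 v_θ λ - A) along an unforced Keplerian trajectory (r' = v_r, v_r' = (v_θ² - γ/r)/r, v_θ' = -v_r v_θ/r, with r > 0, v_r ≠ 0). Then the Hamiltonian integral -(γ/r²) λ - v_r(λ' - (v_θ/r) μ) - v_θ(μ' + (v_θ/r) λ) + C = 0 holds identically. -/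
open Matrix

theorem stmt13 (γ A C : ℝ) (hγ : 0 < γ) (r vr vθ lam mu : ℝ → ℝ)
    (hrpos : ∀ t, 0 < r t) (hvrne : ∀ t, vr t ≠ 0)
    (hr : Differentiable ℝ r) (hvr : Differentiable ℝ vr) (hvθ : Differentiable ℝ vθ)
    (hlam : Differentiable ℝ lam) (hmu : Differentiable ℝ mu)
    (hreq : ∀ t, deriv r t = vr t)
    (hvreq : ∀ t, deriv vr t = ((vθ t)^2 - γ / r t) / r t)
    (hvθeq : ∀ t, deriv vθ t = -(vr t * vθ t) / r t)
    (hlameq : ∀ t, deriv lam t =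
      (1 / vr t) * (((vθ t)^2 - γ / r t) * (lam t / r t) + (vθ t / r t) * A + C))
    (hmueq : ∀ t, deriv mu t = (1 / r t) * (vr t * mu t - 2 * vθ t * lam t - A)) :
    ∀ t, -(γ / (r t)^2) * lam t - vr t * (deriv lam t - (vθ t / r t) * mu t)
      - vθ t * (deriv mu t + (vθ t / r t) * lam t) + C = 0 := by
  intro t
  have hrne := (hrpos t).ne'
  have hvne := hvrne t
  rw [hlameq t, hmueq t]
  field_simp
  ring
end
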